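/- Let D ⊆ ℝ² be open, let N₀ : D → ℂ³ be differentiable with (N₀ p) ⬝ (N₀ p) = 1 for all p, let R : D → Matrix (Fin 3) (Fin 3) ℂ be twice continuously differentiable with (R p)ᵀ * R p = 1 and det (R p) = 1 for all p, and let ω_u, ω_v : D → ℂ³ be differentiable with N₀ p ⬝ ω_u p = 0, N₀ p ⬝ ω_v p = 0, (R p)ᵀ * fderiv ℝ R p (1,0) = α (ω_u p) and (R p)ᵀ * fderiv ℝ R p (0,1) = α (ω_v p) for all p ∈ D. Then for all p ∈ D: ω_u p × ω_v p = ((fderiv ℝ N₀ p (1,0)) ⬝ (ω_v p) − (fderiv ℝ N₀ p (0,1)) ⬝ (ω_u p)) • N₀ p. (This is the paper's identity ½ ω ×∧ ω = dN₀ᵀ ∧ ω N₀, equation (2.7).) -/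

import Mathlib

open Matrix

noncomputable instance : NormedAddCommGroup (Matrix (Fin 3) (Fin 3) ℂ) :=
  Matrix.normedAddCommGroup

noncomputable instance : NormedSpace ℝ (Matrix (Fin 3) (Fin 3) ℂ) :=
  Matrix.normedSpace

/-- The symmetric bilinear dot product on ℂ³ (not the Hermitian inner product). -/
def dot3 (x y : Fin 3 → ℂ) : ℂ := x 0 * y 0 + x 1 * y 1 + x 2 * y 2

/-- The standard cross product on ℂ³. -/
def cross3 (x y : Fin 3 → ℂ) : Fin 3 → ℂ := crossProduct x y

/-- The hat map α : ℂ³ → o₃(ℂ). -/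
def hat (x : Fin 3 → ℂ) : Matrix (Fin 3) (Fin 3) ℂ :=
  !![0, -x 2, x 1; x 2, 0, -x 0; -x 1, x 0, 0]

/-!
Differentiating `Rᵀ ∂ᵤR = α(ωᵤ)` along `v` and `Rᵀ ∂ᵥR = α(ωᵥ)` along `u`, the second derivatives
of `R` cancel by the symmetry of the Hessian, and orthogonality of `R` turns what is left into the
commutator `⁅α(ωᵤ), α(ωᵥ)⁆ = α(ωᵤ × ωᵥ)`. Hence `∂ᵥωᵤ - ∂ᵤωᵥ = ωᵤ × ωᵥ`. As `ωᵤ` and `ωᵥ` are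
orthogonal to the unit vector `N₀`, their cross product is its `N₀`-component times `N₀`, and
differentiating `N₀ ⬝ ω = 0` computes that component as `∂ᵤN₀ ⬝ ωᵥ - ∂ᵥN₀ ⬝ ωᵤ`.
-/

open Filter Topology

theorem cross_eq_dotProduct_cross_smul {R : Type*} [CommRing R] {n a b : Fin 3 → R}
    (hn : n ⬝ᵥ n = 1) (ha : n ⬝ᵥ a = 0) (hb : n ⬝ᵥ b = 0) :
    a ⨯₃ b = (n ⬝ᵥ a ⨯₃ b) • n := by
  have hcross : n ⨯₃ (a ⨯₃ b) = 0 := by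
    rw [cross_cross_eq_smul_sub_smul', hb, dotProduct_comm, ha, zero_smul, zero_smul, sub_zero]
  have h := cross_cross_eq_smul_sub_smul' n n (a ⨯₃ b)
  rw [hcross, map_zero, hn, one_smul] at h
  exact (sub_eq_zero.mp h.symm).symm

theorem dot3_eq_dotProduct (x y : Fin 3 → ℂ) : dot3 x y = x ⬝ᵥ y :=
  (vec3_dotProduct x y).symm

theorem hat_mulVec (x y : Fin 3 → ℂ) : hat x *ᵥ y = x ⨯₃ y := by
  ext i
  fin_cases i <;> simp [hat, cross_apply, mulVec, dotProduct, Fin.sum_univ_three] <;> ring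

theorem transpose_hat (x : Fin 3 → ℂ) : (hat x)ᵀ = -hat x := by
  ext i j
  fin_cases i <;> fin_cases j <;> simp [hat]

theorem hat_injective : Function.Injective hat := by
  intro x y h
  ext i
  fin_cases i
  · simpa [hat] using congrFun₂ h 2 1
  · simpa [hat] using congrFun₂ h 0 2
  · simpa [hat] using congrFun₂ h 1 0

theorem hat_cross (x y : Fin 3 → ℂ) : hat (x ⨯₃ y) = ⁅hat x, hat y⁆ := by
  apply mulVec_injective
  funext z
  simp only [Ring.lie_def, sub_mulVec, ← mulVec_mulVec, hat_mulVec, cross_cross]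

noncomputable def hatL : (Fin 3 → ℂ) →L[ℝ] Matrix (Fin 3) (Fin 3) ℂ :=
  LinearMap.toContinuousLinearMap
    { toFun := hat
      map_add' x y := by ext i j; fin_cases i <;> fin_cases j <;> simp [hat] <;> ring
      map_smul' c x := by ext i j; fin_cases i <;> fin_cases j <;> simp [hat] }

section Calculus

variable {𝕜 E F G H : Type*} [NontriviallyNormedField 𝕜] [CompleteSpace 𝕜]
  [NormedAddCommGroup E] [NormedSpace 𝕜 E]
  [NormedAddCommGroup F] [NormedSpace 𝕜 F] [FiniteDimensional 𝕜 F]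
  [NormedAddCommGroup G] [NormedSpace 𝕜 G] [FiniteDimensional 𝕜 G]
  [NormedAddCommGroup H] [NormedSpace 𝕜 H] {f : E → F} {g : E → G} {p : E}

theorem LinearMap.fderiv_apply₂ (B : F →ₗ[𝕜] G →ₗ[𝕜] H) (hf : DifferentiableAt 𝕜 f p)
    (hg : DifferentiableAt 𝕜 g p) (w : E) :
    fderiv 𝕜 (fun q => B (f q) (g q)) p w =
      B (fderiv 𝕜 f p w) (g p) + B (f p) (fderiv 𝕜 g p w) := by
  change fderiv 𝕜 (fun q => B.toContinuousBilinearMap (f q) (g q)) p w = _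
  rw [B.toContinuousBilinearMap.fderiv_of_bilinear hf hg]
  simp [add_comm]

end Calculus

section MatrixCalculus

attribute [local instance] Matrix.normedAddCommGroup Matrix.normedSpace

variable {E : Type*} [NormedAddCommGroup E] [NormedSpace ℝ E] {p : E}
  {l m n : Type*} [Fintype l] [Fintype m] [Fintype n]

theorem fderiv_transpose_mul_apply {A : E → Matrix m n ℂ} {B : E → Matrix m l ℂ}
    (hA : DifferentiableAt ℝ A p) (hB : DifferentiableAt ℝ B p) (w : E) :
    fderiv ℝ (fun q => (A q)ᵀ * B q) p w =
      (fderiv ℝ A p w)ᵀ * B p + (A p)ᵀ * fderiv ℝ B p w :=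
  ((mulLinearMap ℝ).compl₁₂ (transposeLinearEquiv _ _ ℝ ℂ).toLinearMap LinearMap.id).fderiv_apply₂
    hA hB w

theorem fderiv_dotProduct_apply {f g : E → n → ℂ}
    (hf : DifferentiableAt ℝ f p) (hg : DifferentiableAt ℝ g p) (w : E) :
    fderiv ℝ (fun q => f q ⬝ᵥ g q) p w = fderiv ℝ f p w ⬝ᵥ g p + f p ⬝ᵥ fderiv ℝ g p w :=
  (dotProductBilin ℝ ℝ).fderiv_apply₂ hf hg w

theorem fderiv_transpose_mul_fderiv_sub_swap {R : E → Matrix m n ℂ}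
    (hR : ContDiffAt ℝ 2 R p) (v w : E) :
    fderiv ℝ (fun q => (R q)ᵀ * fderiv ℝ R q v) p w -
        fderiv ℝ (fun q => (R q)ᵀ * fderiv ℝ R q w) p v =
      (fderiv ℝ R p w)ᵀ * fderiv ℝ R p v - (fderiv ℝ R p v)ᵀ * fderiv ℝ R p w := by
  have hR₁ : DifferentiableAt ℝ R p := hR.differentiableAt (by norm_num)
  have hR₂ : DifferentiableAt ℝ (fderiv ℝ R) p :=
    (hR.fderiv_right (m := 1) (by norm_num)).differentiableAt (by norm_num)
  have hsecond (u u' : E) :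
      fderiv ℝ (fun q => fderiv ℝ R q u) p u' = fderiv ℝ (fderiv ℝ R) p u' u := by
    have h := ((ContinuousLinearMap.apply ℝ (Matrix m n ℂ) u).hasFDerivAt.comp p
      hR₂.hasFDerivAt).fderiv
    exact DFunLike.congr_fun h u'
  have hsymm : fderiv ℝ (fderiv ℝ R) p w v = fderiv ℝ (fderiv ℝ R) p v w :=
    hR.isSymmSndFDerivAt (by simp) w v
  have hdir (u : E) : DifferentiableAt ℝ (fun q => fderiv ℝ R q u) p :=
    hR₂.clm_apply (differentiableAt_const u)
  rw [fderiv_transpose_mul_apply hR₁ (hdir v), fderiv_transpose_mul_apply hR₁ (hdir w),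
    hsecond, hsecond, hsymm]
  abel

theorem dotProduct_fderiv_eq_neg_fderiv_dotProduct {N ω : E → n → ℂ}
    (hN : DifferentiableAt ℝ N p) (hω : DifferentiableAt ℝ ω p)
    (h : ∀ᶠ q in 𝓝 p, N q ⬝ᵥ ω q = 0) (w : E) :
    N p ⬝ᵥ fderiv ℝ ω p w = -(fderiv ℝ N p w ⬝ᵥ ω p) := by
  have hderiv := fderiv_dotProduct_apply hN hω w
  rw [EventuallyEq.fderiv_eq (f := fun _ => 0) h, fderiv_fun_const, Pi.zero_apply,
    _root_.zero_apply] at hderiv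
  linear_combination -hderiv

end MatrixCalculus

section StructureEquation

variable {E : Type*} [NormedAddCommGroup E] [NormedSpace ℝ E] {p : E}

theorem fderiv_hat_apply {ω : E → Fin 3 → ℂ} (hω : DifferentiableAt ℝ ω p) (w : E) :
    fderiv ℝ (fun q => hat (ω q)) p w = hat (fderiv ℝ ω p w) :=
  DFunLike.congr_fun (hatL.hasFDerivAt.comp p hω.hasFDerivAt).fderiv w

theorem fderiv_sub_fderiv_eq_cross {R : E → Matrix (Fin 3) (Fin 3) ℂ} {ω₁ ω₂ : E → Fin 3 → ℂ}
    {v w : E} (hR : ContDiffAt ℝ 2 R p) (horth : (R p)ᵀ * R p = 1)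
    (hω₁ : DifferentiableAt ℝ ω₁ p) (hω₂ : DifferentiableAt ℝ ω₂ p)
    (h₁ : ∀ᶠ q in 𝓝 p, (R q)ᵀ * fderiv ℝ R q v = hat (ω₁ q))
    (h₂ : ∀ᶠ q in 𝓝 p, (R q)ᵀ * fderiv ℝ R q w = hat (ω₂ q)) :
    fderiv ℝ ω₁ p w - fderiv ℝ ω₂ p v = ω₁ p ⨯₃ ω₂ p := by
  have hpull (A B : Matrix (Fin 3) (Fin 3) ℂ) : Aᵀ * B = ((R p)ᵀ * A)ᵀ * ((R p)ᵀ * B) := by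
    rw [transpose_mul, transpose_transpose, Matrix.mul_assoc, ← Matrix.mul_assoc (R p),
      mul_eq_one_comm.mp horth, Matrix.one_mul]
  apply hat_injective
  calc hat (fderiv ℝ ω₁ p w - fderiv ℝ ω₂ p v)
      = fderiv ℝ (fun q => hat (ω₁ q)) p w - fderiv ℝ (fun q => hat (ω₂ q)) p v := by
        rw [fderiv_hat_apply hω₁, fderiv_hat_apply hω₂]
        exact map_sub hatL _ _
    _ = fderiv ℝ (fun q => (R q)ᵀ * fderiv ℝ R q v) p w -
          fderiv ℝ (fun q => (R q)ᵀ * fderiv ℝ R q w) p v := by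
        rw [EventuallyEq.fderiv_eq h₁, EventuallyEq.fderiv_eq h₂]
    _ = (fderiv ℝ R p w)ᵀ * fderiv ℝ R p v - (fderiv ℝ R p v)ᵀ * fderiv ℝ R p w :=
        fderiv_transpose_mul_fderiv_sub_swap hR v w
    _ = (hat (ω₂ p))ᵀ * hat (ω₁ p) - (hat (ω₁ p))ᵀ * hat (ω₂ p) := by
        rw [hpull, hpull (fderiv ℝ R p v), h₁.self_of_nhds, h₂.self_of_nhds]
    _ = hat (ω₁ p ⨯₃ ω₂ p) := by
        rw [transpose_hat, transpose_hat, hat_cross, Ring.lie_def]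
        noncomm_ring

end StructureEquation

theorem omega_cross_omega_general (D : Set (ℝ × ℝ)) (hD : IsOpen D)
    (N₀ : ℝ × ℝ → Fin 3 → ℂ) (hN₀ : DifferentiableOn ℝ N₀ D)
    (hunit : ∀ p, dot3 (N₀ p) (N₀ p) = 1)
    (R : ℝ × ℝ → Matrix (Fin 3) (Fin 3) ℂ) (hR : ContDiffOn ℝ 2 R D)
    (horth : ∀ p ∈ D, (R p)ᵀ * R p = 1)
    (ωu ωv : ℝ × ℝ → Fin 3 → ℂ)
    (hωu : DifferentiableOn ℝ ωu D) (hωv : DifferentiableOn ℝ ωv D)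
    (htu : ∀ p ∈ D, dot3 (N₀ p) (ωu p) = 0)
    (htv : ∀ p ∈ D, dot3 (N₀ p) (ωv p) = 0)
    (hαu : ∀ p ∈ D, (R p)ᵀ * fderiv ℝ R p (1, 0) = hat (ωu p))
    (hαv : ∀ p ∈ D, (R p)ᵀ * fderiv ℝ R p (0, 1) = hat (ωv p)) :
    ∀ p ∈ D,
      cross3 (ωu p) (ωv p) =
        (dot3 (fderiv ℝ N₀ p (1, 0)) (ωv p) -
          dot3 (fderiv ℝ N₀ p (0, 1)) (ωu p)) • N₀ p := by
  intro p hp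
  simp only [dot3_eq_dotProduct] at hunit htu htv ⊢
  have hpD : D ∈ 𝓝 p := hD.mem_nhds hp
  have hN := hN₀.differentiableAt hpD
  have hu := hωu.differentiableAt hpD
  have hv := hωv.differentiableAt hpD
  have hflat : fderiv ℝ ωu p (0, 1) - fderiv ℝ ωv p (1, 0) = ωu p ⨯₃ ωv p :=
    fderiv_sub_fderiv_eq_cross (hR.contDiffAt hpD) (horth p hp) hu hv
      (eventually_of_mem hpD hαu) (eventually_of_mem hpD hαv)
  have hu' := dotProduct_fderiv_eq_neg_fderiv_dotProduct hN hu (eventually_of_mem hpD htu) (0, 1)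
  have hv' := dotProduct_fderiv_eq_neg_fderiv_dotProduct hN hv (eventually_of_mem hpD htv) (1, 0)
  rw [cross3, cross_eq_dotProduct_cross_smul (hunit p) (htu p hp) (htv p hp), ← hflat,
    dotProduct_sub, hu', hv', neg_sub_neg]

/-- The paper's identity ½ ω ×∧ ω = dN₀ᵀ ∧ ω N₀, equation (2.7). -/
theorem omega_cross_omega (D : Set (ℝ × ℝ)) (hD : IsOpen D)
    (N₀ : ℝ × ℝ → Fin 3 → ℂ) (hN₀ : DifferentiableOn ℝ N₀ D)
    (hunit : ∀ p, dot3 (N₀ p) (N₀ p) = 1)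
    (R : ℝ × ℝ → Matrix (Fin 3) (Fin 3) ℂ) (hR : ContDiffOn ℝ 2 R D)
    (horth : ∀ p ∈ D, (R p)ᵀ * R p = 1) (hdet : ∀ p ∈ D, (R p).det = 1)
    (ωu ωv : ℝ × ℝ → Fin 3 → ℂ)
    (hωu : DifferentiableOn ℝ ωu D) (hωv : DifferentiableOn ℝ ωv D)
    (htu : ∀ p ∈ D, dot3 (N₀ p) (ωu p) = 0)
    (htv : ∀ p ∈ D, dot3 (N₀ p) (ωv p) = 0)
    (hαu : ∀ p ∈ D, (R p)ᵀ * fderiv ℝ R p (1, 0) = hat (ωu p))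
    (hαv : ∀ p ∈ D, (R p)ᵀ * fderiv ℝ R p (0, 1) = hat (ωv p)) :
    ∀ p ∈ D,
      cross3 (ωu p) (ωv p) =
        (dot3 (fderiv ℝ N₀ p (1, 0)) (ωv p) -
          dot3 (fderiv ℝ N₀ p (0, 1)) (ωu p)) • N₀ p :=
  omega_cross_omega_general D hD N₀ hN₀ hunit R hR horth ωu ωv hωu hωv htu htv hαu hαv
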